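/- arXiv:1301.5874 — 2 statements merged into one kernel-verified Lean document; each statement's English description precedes it below -/
import Mathlib

section
/- Let σ > 0, λ > 0, let x0 : ℕ → ℝ be a fixed real sequence, let (W_i)_{i∈ℕ} be i.i.d. centered Gaussian random variables of variance σ², and set Y_i = x0_i + W_i. Let h : ℕ → (0,∞) satisfy h(P) → 0 and 1/(P·h(P)) → 0 as P → ∞. Then (1/P)·(EDOF_HT((Y_1,…,Y_P), λ, h(P)) − DOF_HT((x0_1,…,x0_P), λ)) converges to 0 in probability as P → ∞. -/
open MeasureTheory ProbabilityTheory Filter Real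

/-- Scalar hard thresholding at threshold `lam`. -/
noncomputable def HT (lam y : ℝ) : ℝ := if |y| < lam then 0 else y

/-- The DOF estimator `EDOF_HT(y, λ, h)` for hard thresholding. -/
noncomputable def EDOF (σ lam h : ℝ) (P : ℕ) (y : ℕ → ℝ) : ℝ :=
  (∑ i ∈ Finset.range P, if lam < |y i| then (1 : ℝ) else 0) +
    lam * Real.sqrt (σ ^ 2 + h ^ 2) / (Real.sqrt (2 * π) * σ * h) *
      ∑ i ∈ Finset.range P,
        (Real.exp (-(y i + lam) ^ 2 / (2 * h ^ 2)) +
          Real.exp (-(y i - lam) ^ 2 / (2 * h ^ 2)))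

/-- Covariance of two real random variables. -/
noncomputable def cov {Ω : Type*} [MeasurableSpace Ω] (μ : Measure Ω) (X Y : Ω → ℝ) : ℝ :=
  ∫ ω, (X ω - ∫ x, X x ∂μ) * (Y ω - ∫ x, Y x ∂μ) ∂μ

/-- The degrees of freedom of hard thresholding:
`DOF_HT(x0, λ) = ∑ i Cov(Y i, HT(Y i, λ)) / σ²` where `Y` is the (random) observation. -/
noncomputable def DOF {Ω : Type*} [MeasurableSpace Ω] (μ : Measure Ω) (σ lam : ℝ) (P : ℕ)
    (Y : ℕ → Ω → ℝ) : ℝ :=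
  ∑ i ∈ Finset.range P, cov μ (Y i) (fun ω => HT lam (Y i ω)) / σ ^ 2

/-!
For `Y ~ N(m, σ²)`, integration by parts against the Gaussian density, with the jumps of hard
thresholding at `±λ` as boundary terms, gives Stein's formula
`Cov(Y, HT(Y, λ)) / σ² = P(|Y| > λ) + λ (e^{-(λ-m)²/2σ²} + e^{-(λ+m)²/2σ²}) / (√(2π) σ)`.
The Gaussian kernels of width `h` in `EDOF` integrate against `N(m, σ²)` to the same expression
with `σ²` replaced by `σ² + h²` in the exponents (variances add under convolution), so each
summand of `EDOF` estimates its DOF term with bias `O(h²)`, uniformly in `m`; its second moment is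
`O(1/h)` since the kernels have height `1` and width `h`. The summands are independent, so
`(EDOF - DOF) / P` has bias `O(h²)` and variance `O(1 / (P h))`, and Chebyshev's inequality
concludes.
-/

open Set
open scoped NNReal ENNReal Topology

section ImproperFTC

variable {E : Type*} [NormedAddCommGroup E] [NormedSpace ℝ E] [CompleteSpace E] {f f' : ℝ → E}
  {a : ℝ}

theorem integral_Ioi_of_hasDerivAt_of_integrableOn
    (hderiv : ∀ x ∈ Ici a, HasDerivAt f (f' x) x) (hf : IntegrableOn f (Ioi a))
    (hf' : IntegrableOn f' (Ioi a)) : ∫ x in Ioi a, f' x = -f a := by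
  rw [integral_Ioi_of_hasDerivAt_of_tendsto' hderiv hf'
    (tendsto_zero_of_hasDerivAt_of_integrableOn_Ioi (fun x hx => hderiv x hx.out.le) hf' hf),
    zero_sub]

theorem integral_Iic_of_hasDerivAt_of_integrableOn
    (hderiv : ∀ x ∈ Iic a, HasDerivAt f (f' x) x) (hf : IntegrableOn f (Iic a))
    (hf' : IntegrableOn f' (Iic a)) : ∫ x in Iic a, f' x = f a := by
  rw [integral_Iic_of_hasDerivAt_of_tendsto' hderiv hf'
    (tendsto_zero_of_hasDerivAt_of_integrableOn_Iic hderiv hf' hf), sub_zero]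

end ImproperFTC

theorem exp_neg_sq_div_le_one {s : ℝ} (hs : 0 ≤ s) (x : ℝ) : exp (-x ^ 2 / (2 * s)) ≤ 1 :=
  exp_le_one_iff.2 (div_nonpos_of_nonpos_of_nonneg (neg_nonpos.2 (sq_nonneg x)) (by positivity))

theorem integrable_exp_neg_sq_div {μ : Measure ℝ} [IsFiniteMeasure μ] {s : ℝ} (hs : 0 ≤ s)
    (t : ℝ) : Integrable (fun y => exp (-(y - t) ^ 2 / (2 * s))) μ :=
  .of_bound (by fun_prop) 1 (.of_forall fun y => by
    rw [norm_of_nonneg (exp_nonneg _)]; exact exp_neg_sq_div_le_one hs _)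

theorem abs_exp_neg_sq_div_sub_le {s s' : ℝ} (hs : 0 < s) (hss' : s ≤ s') (t : ℝ) :
    |exp (-t ^ 2 / (2 * s')) - exp (-t ^ 2 / (2 * s))| ≤ (s' - s) / s := by
  have hs' : 0 < s' := hs.trans_le hss'
  set a := t ^ 2 / (2 * s')
  have ha : 0 ≤ a := by positivity
  have hgap : t ^ 2 / (2 * s) - a = a * ((s' - s) / s) := by
    simp only [a]
    field_simp
  have hgap_nonneg : 0 ≤ a * ((s' - s) / s) := mul_nonneg ha (div_nonneg (by linarith) hs.le)
  have hsplit : exp (-t ^ 2 / (2 * s)) = exp (-a) * exp (-(a * ((s' - s) / s))) := by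
    rw [← exp_add, ← hgap, neg_div]
    ring_nf
  -- `a e^{-a} ≤ 1` is what makes the bound uniform in `t`
  have hdecay : a * exp (-a) ≤ 1 :=
    (mul_exp_neg_le_exp_neg_one a).trans (exp_le_one_iff.2 (by norm_num))
  rw [neg_div, hsplit, abs_of_nonneg (sub_nonneg.2 (mul_le_of_le_one_right (exp_nonneg _)
    (exp_le_one_iff.2 (neg_nonpos.2 hgap_nonneg))))]
  calc exp (-a) - exp (-a) * exp (-(a * ((s' - s) / s)))
      = exp (-a) * (1 - exp (-(a * ((s' - s) / s)))) := by ring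
    _ ≤ exp (-a) * (a * ((s' - s) / s)) := by
        gcongr
        linarith [one_sub_le_exp_neg (a * ((s' - s) / s))]
    _ = a * exp (-a) * ((s' - s) / s) := by ring
    _ ≤ (s' - s) / s := mul_le_of_le_one_left (div_nonneg (by linarith) hs.le) hdecay

namespace ProbabilityTheory

variable {m : ℝ} {v : ℝ≥0}

theorem integrable_gaussianReal_iff (hv : v ≠ 0) {f : ℝ → ℝ} :
    Integrable f (gaussianReal m v) ↔ Integrable (fun x => gaussianPDFReal m v x * f x) := by
  rw [gaussianReal_of_var_ne_zero m hv, integrable_withDensity_iff_integrable_smul'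
    (measurable_gaussianPDF m v) (.of_forall fun _ => gaussianPDF_lt_top)]
  simp only [toReal_gaussianPDF, smul_eq_mul]

theorem hasDerivAt_gaussianPDFReal (x : ℝ) :
    HasDerivAt (gaussianPDFReal m v) (-(x - m) / v * gaussianPDFReal m v x) x := by
  have hexponent : HasDerivAt (fun y => -(y - m) ^ 2 / (2 * v)) (-(x - m) / v) x := by
    refine ((((hasDerivAt_id' x).sub_const m).fun_pow 2).fun_neg.div_const
      (2 * (v : ℝ))).congr_deriv ?_
    rw [neg_div, neg_div, Nat.cast_ofNat, pow_one, mul_one, mul_div_mul_left _ _ two_ne_zero]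
  refine (hexponent.exp.const_mul (√(2 * π * v))⁻¹).congr_deriv ?_
  simp only [gaussianPDFReal]
  ring

theorem integrable_mul_gaussianPDFReal (hv : v ≠ 0) :
    Integrable (fun y => y * gaussianPDFReal m v y) := by
  simpa only [id, mul_comm] using (integrable_gaussianReal_iff (m := m) hv).1
    ((memLp_id_gaussianReal 1).integrable le_rfl)

theorem integrable_mul_sub_mul_gaussianPDFReal (hv : v ≠ 0) :
    Integrable (fun y => y * (y - m) * gaussianPDFReal m v y) := by
  have hsecond : Integrable (fun y => y * (y - m)) (gaussianReal m v) :=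
    (memLp_id_gaussianReal' 2 (by simp)).integrable_mul
      ((memLp_id_gaussianReal' 2 (by simp)).sub (memLp_const m))
  simpa only [mul_comm] using (integrable_gaussianReal_iff hv).1 hsecond

theorem hasDerivAt_neg_mul_mul_gaussianPDFReal (hv : v ≠ 0) (x : ℝ) :
    HasDerivAt (fun y => -v * (y * gaussianPDFReal m v y))
      (x * (x - m) * gaussianPDFReal m v x - v * gaussianPDFReal m v x) x := by
  refine (((hasDerivAt_id' x).mul (hasDerivAt_gaussianPDFReal x)).const_mul
    (-(v : ℝ))).congr_deriv ?_
  have : (v : ℝ) ≠ 0 := NNReal.coe_ne_zero.2 hv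
  field_simp
  ring

theorem integral_Ioi_mul_sub_mul_gaussianPDFReal (hv : v ≠ 0) (b : ℝ) :
    ∫ y in Ioi b, y * (y - m) * gaussianPDFReal m v y =
      v * (∫ y in Ioi b, gaussianPDFReal m v y) + v * b * gaussianPDFReal m v b := by
  have hint := (integrable_gaussianPDFReal m v).const_mul (v : ℝ)
  have h := integral_Ioi_of_hasDerivAt_of_integrableOn (a := b)
    (fun x _ => hasDerivAt_neg_mul_mul_gaussianPDFReal hv x)
    ((integrable_mul_gaussianPDFReal hv).const_mul (-(v : ℝ))).integrableOn
    ((integrable_mul_sub_mul_gaussianPDFReal hv).sub hint).integrableOn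
  rw [integral_sub (integrable_mul_sub_mul_gaussianPDFReal hv).integrableOn hint.integrableOn,
    integral_const_mul] at h
  linear_combination h

theorem integral_Iic_mul_sub_mul_gaussianPDFReal (hv : v ≠ 0) (a : ℝ) :
    ∫ y in Iic a, y * (y - m) * gaussianPDFReal m v y =
      v * (∫ y in Iic a, gaussianPDFReal m v y) - v * a * gaussianPDFReal m v a := by
  have hint := (integrable_gaussianPDFReal m v).const_mul (v : ℝ)
  have h := integral_Iic_of_hasDerivAt_of_integrableOn (a := a)
    (fun x _ => hasDerivAt_neg_mul_mul_gaussianPDFReal hv x)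
    ((integrable_mul_gaussianPDFReal hv).const_mul (-(v : ℝ))).integrableOn
    ((integrable_mul_sub_mul_gaussianPDFReal hv).sub hint).integrableOn
  rw [integral_sub (integrable_mul_sub_mul_gaussianPDFReal hv).integrableOn hint.integrableOn,
    integral_const_mul] at h
  linear_combination h

theorem measureReal_lt_abs_gaussianReal (hv : v ≠ 0) {lam : ℝ} (hlam : 0 ≤ lam) :
    (gaussianReal m v).real {y | lam < |y|} =
      (∫ y in Iic (-lam), gaussianPDFReal m v y) + ∫ y in Ioi lam, gaussianPDFReal m v y := by
  have hset : {y : ℝ | lam < |y|} = Iio (-lam) ∪ Ioi lam := by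
    ext y
    simp only [mem_ofPred_eq, mem_union, mem_Iio, mem_Ioi, lt_abs]
    constructor <;> rintro (h | h) <;> [right; left; right; left] <;> linarith
  have hdisj : Disjoint (Iio (-lam)) (Ioi lam) :=
    Set.disjoint_left.2 fun y hy hy' => by simp only [mem_Iio, mem_Ioi] at hy hy'; linarith
  rw [measureReal_def, gaussianReal_apply_eq_integral m hv, ENNReal.toReal_ofReal
    (setIntegral_nonneg (measurableSet_lt measurable_const (by fun_prop))
      fun y _ => gaussianPDFReal_nonneg m v y), hset, setIntegral_union hdisj measurableSet_Ioi
    (integrable_gaussianPDFReal m v).integrableOn (integrable_gaussianPDFReal m v).integrableOn,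
    integral_Iic_eq_integral_Iio]

theorem integral_exp_neg_sq_div_gaussianReal (hv : v ≠ 0) {s : ℝ} (hs : 0 < s) (t : ℝ) :
    ∫ y, exp (-(y - t) ^ 2 / (2 * s)) ∂gaussianReal m v =
      √(s / (v + s)) * exp (-(t - m) ^ 2 / (2 * (v + s))) := by
  have hv' : (0 : ℝ) < v := lt_of_le_of_ne v.2 (NNReal.coe_ne_zero.2 hv).symm
  -- complete the square in `y`
  set α : ℝ := (v + s) / (2 * v * s)
  set c : ℝ := (s * m + v * t) / (v + s)
  have hsquare : ∀ y, gaussianPDFReal m v y * exp (-(y - t) ^ 2 / (2 * s)) =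
      (√(2 * π * v))⁻¹ * exp (-(t - m) ^ 2 / (2 * (v + s))) * exp (-α * (y - c) ^ 2) := by
    intro y
    rw [gaussianPDFReal, mul_assoc, mul_assoc _ (exp _), ← exp_add, ← exp_add]
    congr 2
    simp only [α, c]
    field_simp
    ring
  rw [integral_gaussianReal_eq_integral_smul hv]
  simp_rw [smul_eq_mul, hsquare]
  rw [integral_const_mul, integral_sub_right_eq_self (fun y => exp (-α * y ^ 2)) c,
    integral_gaussian, ← sqrt_inv, mul_right_comm, ← sqrt_mul (by positivity)]
  congr 2
  simp only [α]
  field_simp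

theorem integral_exp_neg_sq_div_gaussianReal_le (hv : v ≠ 0) {s : ℝ} (hs : 0 < s) (t : ℝ) :
    ∫ y, exp (-(y - t) ^ 2 / (2 * s)) ∂gaussianReal m v ≤ √(s / v) := by
  have hv' : (0 : ℝ) < v := lt_of_le_of_ne v.2 (NNReal.coe_ne_zero.2 hv).symm
  rw [integral_exp_neg_sq_div_gaussianReal hv hs]
  exact (mul_le_of_le_one_right (sqrt_nonneg _) (exp_neg_sq_div_le_one (by positivity) _)).trans
    (sqrt_le_sqrt (div_le_div_of_nonneg_left hs.le hv' (by linarith)))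

end ProbabilityTheory

section WeakLaw

variable {Ω : Type*} [MeasurableSpace Ω] {μ : Measure Ω}

theorem tendstoInMeasure_sub_of_tendsto_variance [IsFiniteMeasure μ] {ι : Type*} {l : Filter ι}
    {X : ι → Ω → ℝ} {c : ι → ℝ} (hX : ∀ n, MemLp (X n) 2 μ)
    (hmean : Tendsto (fun n => μ[X n] - c n) l (𝓝 0))
    (hvar : Tendsto (fun n => Var[X n; μ]) l (𝓝 0)) :
    TendstoInMeasure μ (fun n ω => X n ω - c n) l (fun _ => 0) := by
  refine tendstoInMeasure_iff_dist.2 fun ε hε => ?_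
  have hcheb : Tendsto (fun n => ENNReal.ofReal (Var[X n; μ] / (ε / 2) ^ 2)) l (𝓝 0) := by
    simpa using ENNReal.tendsto_ofReal (hvar.div_const ((ε / 2) ^ 2))
  refine tendsto_of_tendsto_of_tendsto_of_le_of_le' tendsto_const_nhds hcheb
    (.of_forall fun _ => zero_le) ?_
  filter_upwards [hmean.abs.eventually_lt_const (by rw [abs_zero]; exact half_pos hε)]
    with n hn
  refine (measure_mono fun ω hω => ?_).trans (meas_ge_le_variance_div_sq (hX n) (half_pos hε))
  simp only [mem_ofPred_eq, Real.dist_eq, sub_zero] at hω hn ⊢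
  have := abs_sub_abs_le_abs_sub (X n ω - c n) (μ[X n] - c n)
  rw [sub_sub_sub_cancel_right] at this
  linarith

theorem tendstoInMeasure_average_sub [IsProbabilityMeasure μ] {F : ℕ → ℕ → Ω → ℝ}
    {d : ℕ → ℕ → ℝ} {B V : ℕ → ℝ} (hF : ∀ n i, MemLp (F n i) 2 μ)
    (hindep : ∀ n, Pairwise fun i j => IndepFun (F n i) (F n j) μ)
    (hbias : ∀ n i, |μ[F n i] - d n i| ≤ B n) (hB : Tendsto B atTop (𝓝 0))
    (hvar : ∀ n i, Var[F n i; μ] ≤ V n) (hV : Tendsto (fun n => V n / n) atTop (𝓝 0)) :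
    TendstoInMeasure μ
      (fun (n : ℕ) ω => (1 / (n : ℝ)) * ∑ i ∈ Finset.range n, (F n i ω - d n i))
      atTop (fun _ => 0) := by
  set X : ℕ → Ω → ℝ := fun n ω => (1 / (n : ℝ)) * ∑ i ∈ Finset.range n, F n i ω
  have hX : ∀ n, MemLp (X n) 2 μ := fun n =>
    (memLp_finsetSum _ fun i _ => hF n i).const_mul _
  have hbias_avg :
      ∀ n : ℕ, |μ[X n] - (1 / (n : ℝ)) * ∑ i ∈ Finset.range n, d n i| ≤ B n := by
    intro n
    rcases Nat.eq_zero_or_pos n with rfl | hn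
    · simpa [X] using (abs_nonneg _).trans (hbias 0 0)
    have hn' : (0 : ℝ) < n := Nat.cast_pos.2 hn
    rw [integral_const_mul, integral_finsetSum _ fun i _ => (hF n i).integrable one_le_two,
      ← mul_sub, ← Finset.sum_sub_distrib, abs_mul, abs_of_pos (by positivity), one_div,
      inv_mul_le_iff₀ hn']
    calc |∑ i ∈ Finset.range n, (μ[F n i] - d n i)|
        ≤ ∑ i ∈ Finset.range n, |μ[F n i] - d n i| := Finset.abs_sum_le_sum_abs _ _
      _ ≤ n * B n := by
        simpa using Finset.sum_le_card_nsmul (Finset.range n) _ _ fun i _ => hbias n i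
  have hvar_avg : ∀ n : ℕ, Var[X n; μ] ≤ V n / n := by
    intro n
    have hsum : X n = (1 / (n : ℝ)) • ∑ i ∈ Finset.range n, F n i := by
      ext ω; simp [X, Finset.sum_apply]
    rw [hsum, variance_smul, IndepFun.variance_sum (fun i _ => hF n i)
      (fun i _ j _ hij => hindep n hij)]
    calc (1 / (n : ℝ)) ^ 2 * ∑ i ∈ Finset.range n, Var[F n i; μ]
        ≤ (1 / (n : ℝ)) ^ 2 * (n * V n) := by
          gcongr
          simpa using Finset.sum_le_card_nsmul (Finset.range n) _ _ fun i _ => hvar n i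
      _ = V n / n := by
        rcases Nat.eq_zero_or_pos n with rfl | hn
        · simp
        · field_simp
  convert tendstoInMeasure_sub_of_tendsto_variance hX
    (c := fun (n : ℕ) => (1 / (n : ℝ)) * ∑ i ∈ Finset.range n, d n i)
    (squeeze_zero_norm hbias_avg hB)
    (squeeze_zero (fun n => variance_nonneg _ _) hvar_avg hV) using 3 with n ω
  rw [Finset.sum_sub_distrib, mul_sub]

end WeakLaw

section HardThresholding

variable {m : ℝ} {v : ℝ≥0} {σ lam : ℝ}

theorem HT_eq_indicator (lam : ℝ) : HT lam = (Iic (-lam) ∪ Ici lam).indicator id := by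
  ext y
  simp only [HT, indicator, mem_union, mem_Iic, mem_Ici, id]
  by_cases hy : |y| < lam
  · rw [if_pos hy, if_neg]
    rw [abs_lt] at hy
    push Not
    constructor <;> linarith
  · rw [if_neg hy, if_pos]
    rw [not_lt, le_abs'] at hy
    exact hy.imp (fun h => by linarith) id

theorem measurable_HT (lam : ℝ) : Measurable (HT lam) := by
  rw [HT_eq_indicator]
  exact measurable_id.indicator (measurableSet_Iic.union measurableSet_Ici)

theorem covariance_HT_gaussianReal (hv : v ≠ 0) (hlam : 0 < lam) :
    cov[fun y => y, HT lam; gaussianReal m v] = v * ((gaussianReal m v).real {y | lam < |y|} +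
      lam * (gaussianPDFReal m v lam + gaussianPDFReal m v (-lam))) := by
  have hdisj : Disjoint (Iic (-lam)) (Ici lam) :=
    Set.disjoint_left.2 fun y hy hy' => by simp only [mem_Iic, mem_Ici] at hy hy'; linarith
  have hweighted : ∀ y, gaussianPDFReal m v y * ((y - m) * HT lam y) =
      (Iic (-lam) ∪ Ici lam).indicator (fun y => y * (y - m) * gaussianPDFReal m v y) y := by
    intro y
    rw [HT_eq_indicator]
    by_cases hy : y ∈ Iic (-lam) ∪ Ici lam
    · simp only [indicator_of_mem hy, id]; ring
    · simp only [indicator_of_notMem hy, mul_zero]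
  have hint_centered : Integrable (fun y => y - m) (gaussianReal m v) :=
    ((memLp_id_gaussianReal 1).integrable le_rfl).sub (integrable_const m)
  have hint : Integrable (fun y => (y - m) * HT lam y) (gaussianReal m v) := by
    refine (integrable_gaussianReal_iff hv).2 ?_
    simp_rw [hweighted]
    exact (integrable_mul_sub_mul_gaussianPDFReal hv).indicator
      (measurableSet_Iic.union measurableSet_Ici)
  have hcentered : ∫ y, (y - m) ∂gaussianReal m v = 0 := by
    rw [integral_sub (f := fun y => y) ((memLp_id_gaussianReal 1).integrable le_rfl)
      (integrable_const m), integral_id_gaussianReal, integral_const, probReal_univ, one_smul,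
      sub_self]
  have hweighted_integral : ∫ y, (y - m) * HT lam y ∂gaussianReal m v =
      v * ((∫ y in Iic (-lam), gaussianPDFReal m v y) +
        (∫ y in Ioi lam, gaussianPDFReal m v y) +
        lam * (gaussianPDFReal m v lam + gaussianPDFReal m v (-lam))) := by
    rw [integral_gaussianReal_eq_integral_smul hv]
    simp_rw [smul_eq_mul, hweighted]
    rw [integral_indicator (measurableSet_Iic.union measurableSet_Ici),
      setIntegral_union hdisj measurableSet_Ici
        (integrable_mul_sub_mul_gaussianPDFReal hv).integrableOn
        (integrable_mul_sub_mul_gaussianPDFReal hv).integrableOn,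
      integral_Ici_eq_integral_Ioi, integral_Iic_mul_sub_mul_gaussianPDFReal hv,
      integral_Ioi_mul_sub_mul_gaussianPDFReal hv]
    ring
  calc cov[fun y => y, HT lam; gaussianReal m v]
      = ∫ y, (y - m) * HT lam y - (∫ z, HT lam z ∂gaussianReal m v) * (y - m)
          ∂gaussianReal m v := by
        rw [covariance, integral_id_gaussianReal]
        congr 1 with y
        ring
    _ = ∫ y, (y - m) * HT lam y ∂gaussianReal m v := by
        rw [integral_sub hint (hint_centered.const_mul _), integral_const_mul, hcentered,
          mul_zero, sub_zero]
    _ = _ := by rw [hweighted_integral, measureReal_lt_abs_gaussianReal hv hlam.le, add_assoc]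

noncomputable def edofWeight (σ lam h : ℝ) : ℝ :=
  lam * √(σ ^ 2 + h ^ 2) / (√(2 * π) * σ * h)

noncomputable def edofTerm (σ lam h y : ℝ) : ℝ :=
  (if lam < |y| then 1 else 0) +
    edofWeight σ lam h * (exp (-(y + lam) ^ 2 / (2 * h ^ 2)) + exp (-(y - lam) ^ 2 / (2 * h ^ 2)))

theorem EDOF_eq_sum_edofTerm (σ lam h : ℝ) (P : ℕ) (y : ℕ → ℝ) :
    EDOF σ lam h P y = ∑ i ∈ Finset.range P, edofTerm σ lam h (y i) := by
  rw [EDOF, Finset.mul_sum, ← Finset.sum_add_distrib]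
  rfl

/-- At `s = v` this is `Cov(Y, HT(Y, λ)) / v` for `Y ~ N(m, v)`; at `s = v + h²` it is the
mean of `edofTerm σ λ h Y` when `v = σ²`. -/
noncomputable def htDof (v : ℝ≥0) (lam m s : ℝ) : ℝ :=
  (gaussianReal m v).real {y | lam < |y|} +
    lam / √(2 * π * v) * (exp (-(lam - m) ^ 2 / (2 * s)) + exp (-(-lam - m) ^ 2 / (2 * s)))

theorem covariance_HT_gaussianReal_eq_htDof (hv : v ≠ 0) (hlam : 0 < lam) :
    cov[fun y => y, HT lam; gaussianReal m v] = v * htDof v lam m v := by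
  rw [covariance_HT_gaussianReal hv hlam, htDof, gaussianPDFReal, gaussianPDFReal]
  ring

theorem integral_edofTerm_gaussianReal (hσ : 0 < σ) (hv : (v : ℝ) = σ ^ 2) {h : ℝ}
    (hh : 0 < h) : ∫ y, edofTerm σ lam h y ∂gaussianReal m v = htDof v lam m (v + h ^ 2) := by
  have hv0 : v ≠ 0 := by rw [← NNReal.coe_ne_zero, hv]; positivity
  have hkernel : ∀ t, ∫ y, exp (-(y - t) ^ 2 / (2 * h ^ 2)) ∂gaussianReal m v =
      h / √(v + h ^ 2) * exp (-(t - m) ^ 2 / (2 * (v + h ^ 2))) := fun t => by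
    rw [integral_exp_neg_sq_div_gaussianReal hv0 (by positivity), sqrt_div (sq_nonneg h),
      sqrt_sq hh.le]
  have hkernel_add : ∫ y, exp (-(y + lam) ^ 2 / (2 * h ^ 2)) ∂gaussianReal m v =
      h / √(v + h ^ 2) * exp (-(-lam - m) ^ 2 / (2 * (v + h ^ 2))) := by
    simpa only [sub_neg_eq_add] using hkernel (-lam)
  have hweight : edofWeight σ lam h * (h / √(v + h ^ 2)) = lam / √(2 * π * v) := by
    have : 0 < √(σ ^ 2 + h ^ 2) := sqrt_pos.2 (by positivity)
    rw [edofWeight, hv, sqrt_mul' _ (sq_nonneg σ), sqrt_sq hσ.le]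
    field_simp
  have hS : MeasurableSet {y : ℝ | lam < |y|} := measurableSet_lt measurable_const (by fun_prop)
  have hindicator :
      (fun y : ℝ => if lam < |y| then (1 : ℝ) else 0) = {y | lam < |y|}.indicator 1 := rfl
  have hint := integrable_exp_neg_sq_div (μ := gaussianReal m v) (sq_nonneg h)
  have hint_add : Integrable (fun y => exp (-(y + lam) ^ 2 / (2 * h ^ 2))) (gaussianReal m v) := by
    simpa only [sub_neg_eq_add] using hint (-lam)
  have hint_kernels : Integrable (fun y => edofWeight σ lam h *
      (exp (-(y + lam) ^ 2 / (2 * h ^ 2)) + exp (-(y - lam) ^ 2 / (2 * h ^ 2))))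
      (gaussianReal m v) := (hint_add.add (hint lam)).const_mul _
  unfold edofTerm
  rw [integral_add (hindicator ▸ (integrable_const 1).indicator hS) hint_kernels,
    integral_const_mul, integral_add hint_add (hint lam),
    hindicator, integral_indicator_one hS, hkernel_add, hkernel, htDof, ← hweight]
  ring

theorem abs_htDof_sub_le {s s' : ℝ} (hs : 0 < s) (hss' : s ≤ s') :
    |htDof v lam m s' - htDof v lam m s| ≤ 2 * |lam / √(2 * π * v)| * ((s' - s) / s) := by
  have h1 := abs_exp_neg_sq_div_sub_le hs hss' (lam - m)
  have h2 := abs_exp_neg_sq_div_sub_le hs hss' (-lam - m)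
  calc |htDof v lam m s' - htDof v lam m s|
      = |lam / √(2 * π * v)| *
          |(exp (-(lam - m) ^ 2 / (2 * s')) - exp (-(lam - m) ^ 2 / (2 * s))) +
            (exp (-(-lam - m) ^ 2 / (2 * s')) - exp (-(-lam - m) ^ 2 / (2 * s)))| := by
        rw [← abs_mul, htDof, htDof]
        ring_nf
    _ ≤ |lam / √(2 * π * v)| * ((s' - s) / s + (s' - s) / s) := by
        gcongr
        exact (abs_add_le _ _).trans (add_le_add h1 h2)
    _ = 2 * |lam / √(2 * π * v)| * ((s' - s) / s) := by ring

theorem measurable_edofTerm (σ lam h : ℝ) : Measurable (edofTerm σ lam h) := by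
  unfold edofTerm
  refine Measurable.add ?_ (by fun_prop)
  exact Measurable.ite (measurableSet_lt measurable_const (by fun_prop)) measurable_const
    measurable_const

theorem abs_edofTerm_le (σ lam h y : ℝ) :
    |edofTerm σ lam h y| ≤ 1 + 2 * |edofWeight σ lam h| := by
  have hindicator : |(if lam < |y| then (1 : ℝ) else 0)| ≤ 1 := by split_ifs <;> simp
  have hkernels :
      |exp (-(y + lam) ^ 2 / (2 * h ^ 2)) + exp (-(y - lam) ^ 2 / (2 * h ^ 2))| ≤ 2 := by
    rw [abs_of_nonneg (by positivity)]
    linarith [exp_neg_sq_div_le_one (sq_nonneg h) (y + lam),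
      exp_neg_sq_div_le_one (sq_nonneg h) (y - lam)]
  calc |edofTerm σ lam h y|
      ≤ 1 + |edofWeight σ lam h| * 2 := by
        refine (abs_add_le _ _).trans ?_
        rw [abs_mul]
        gcongr
    _ = 1 + 2 * |edofWeight σ lam h| := by ring

theorem integral_edofTerm_sq_le (hσ : 0 < σ) (hv : (v : ℝ) = σ ^ 2) {h : ℝ} (hh : 0 < h) :
    ∫ y, edofTerm σ lam h y ^ 2 ∂gaussianReal m v ≤
      2 + 4 * lam ^ 2 * (σ ^ 2 + h ^ 2) / (π * σ ^ 3 * h) := by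
  have hv0 : v ≠ 0 := by rw [← NNReal.coe_ne_zero, hv]; positivity
  set c := edofWeight σ lam h
  set K : ℝ → ℝ → ℝ := fun t y => exp (-(y - t) ^ 2 / (2 * (h ^ 2 / 2)))
  have hsquare : ∀ t y, exp (-(y - t) ^ 2 / (2 * h ^ 2)) ^ 2 = K t y := fun t y => by
    rw [← exp_nat_mul]
    congr 1
    field_simp
    ring
  have hpointwise : ∀ y, edofTerm σ lam h y ^ 2 ≤ 2 + 4 * c ^ 2 * (K (-lam) y + K lam y) := by
    intro y
    have hindicator : (if lam < |y| then (1 : ℝ) else 0) ^ 2 ≤ 1 := by split_ifs <;> simp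
    rw [← hsquare, ← hsquare, sub_neg_eq_add]
    unfold edofTerm
    nlinarith [sq_nonneg ((if lam < |y| then (1 : ℝ) else 0) -
        c * (exp (-(y + lam) ^ 2 / (2 * h ^ 2)) + exp (-(y - lam) ^ 2 / (2 * h ^ 2)))),
      mul_nonneg (sq_nonneg c)
        (sq_nonneg (exp (-(y + lam) ^ 2 / (2 * h ^ 2)) - exp (-(y - lam) ^ 2 / (2 * h ^ 2))))]
  have hint : ∀ t, Integrable (K t) (gaussianReal m v) := fun t =>
    integrable_exp_neg_sq_div (by positivity) t
  have hint_kernels : Integrable (fun y => 4 * c ^ 2 * (K (-lam) y + K lam y)) (gaussianReal m v) :=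
    ((hint _).add (hint _)).const_mul _
  have hkernel : ∀ t, ∫ y, K t y ∂gaussianReal m v ≤ h / σ := fun t => by
    refine (integral_exp_neg_sq_div_gaussianReal_le hv0 (by positivity) t).trans ?_
    rw [hv, show h / σ = √((h / σ) ^ 2) from (sqrt_sq (by positivity)).symm]
    exact sqrt_le_sqrt (by rw [div_pow]; gcongr; linarith [sq_nonneg h])
  have hweight : c ^ 2 = lam ^ 2 * (σ ^ 2 + h ^ 2) / (2 * π * σ ^ 2 * h ^ 2) := by
    simp only [c, edofWeight]
    rw [div_pow, mul_pow, mul_pow, mul_pow, sq_sqrt (by positivity),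
      sq_sqrt (by positivity)]
  calc ∫ y, edofTerm σ lam h y ^ 2 ∂gaussianReal m v
      ≤ ∫ y, 2 + 4 * c ^ 2 * (K (-lam) y + K lam y) ∂gaussianReal m v :=
        integral_mono_of_nonneg (.of_forall fun y => sq_nonneg _)
          ((integrable_const 2).add hint_kernels)
          (.of_forall hpointwise)
    _ = 2 + 4 * c ^ 2 *
          ((∫ y, K (-lam) y ∂gaussianReal m v) + ∫ y, K lam y ∂gaussianReal m v) := by
        rw [integral_add (integrable_const 2) hint_kernels,
          integral_const_mul, integral_add (hint _) (hint _), integral_const, probReal_univ,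
          one_smul]
    _ ≤ 2 + 4 * c ^ 2 * (h / σ + h / σ) := by gcongr <;> exact hkernel _
    _ = 2 + 4 * lam ^ 2 * (σ ^ 2 + h ^ 2) / (π * σ ^ 3 * h) := by
        rw [hweight]
        field_simp
        ring

variable {Ω : Type*} [MeasurableSpace Ω] {μ : Measure Ω} {Y : Ω → ℝ}

theorem memLp_edofTerm_comp [IsFiniteMeasure μ] (hY : AEMeasurable Y μ) (σ lam h : ℝ)
    (p : ℝ≥0∞) : MemLp (fun ω => edofTerm σ lam h (Y ω)) p μ :=
  .of_bound ((measurable_edofTerm σ lam h).comp_aemeasurable hY).aestronglyMeasurable _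
    (.of_forall fun ω => abs_edofTerm_le σ lam h (Y ω))

theorem abs_integral_edofTerm_sub_htDof_le (hY : HasLaw Y (gaussianReal m v) μ) (hσ : 0 < σ)
    (hv : (v : ℝ) = σ ^ 2) {h : ℝ} (hh : 0 < h) :
    |∫ ω, edofTerm σ lam h (Y ω) ∂μ - htDof v lam m v| ≤
      2 * |lam / √(2 * π * v)| * (h ^ 2 / v) := by
  rw [show ∫ ω, edofTerm σ lam h (Y ω) ∂μ = htDof v lam m (v + h ^ 2) from
    (hY.integral_comp (measurable_edofTerm _ _ _).aestronglyMeasurable).trans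
      (integral_edofTerm_gaussianReal hσ hv hh)]
  have hv' : (0 : ℝ) < v := by rw [hv]; positivity
  simpa using abs_htDof_sub_le hv' (le_add_of_nonneg_right (sq_nonneg h))

theorem variance_edofTerm_le (hY : HasLaw Y (gaussianReal m v) μ) (hσ : 0 < σ)
    (hv : (v : ℝ) = σ ^ 2) {h : ℝ} (hh : 0 < h) :
    Var[fun ω => edofTerm σ lam h (Y ω); μ] ≤
      2 + 4 * lam ^ 2 * (σ ^ 2 + h ^ 2) / (π * σ ^ 3 * h) := by
  have := hY.isProbabilityMeasure
  exact (variance_le_expectation_sq (memLp_edofTerm_comp hY.aemeasurable _ _ _ 2).1).trans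
    ((hY.integral_comp ((measurable_edofTerm _ _ _).pow_const 2).aestronglyMeasurable).trans_le
      (integral_edofTerm_sq_le hσ hv hh))

theorem DOF_eq_sum_htDof {Y : ℕ → Ω → ℝ} {m : ℕ → ℝ}
    (hY : ∀ i, HasLaw (Y i) (gaussianReal (m i) v) μ) (hσ : σ ≠ 0) (hv : (v : ℝ) = σ ^ 2)
    (hlam : 0 < lam) (P : ℕ) :
    DOF μ σ lam P Y = ∑ i ∈ Finset.range P, htDof v lam (m i) v := by
  have hv0 : v ≠ 0 := by rw [← NNReal.coe_ne_zero, hv]; positivity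
  refine Finset.sum_congr rfl fun i _ => ?_
  rw [cov, ← covariance, (hY i).covariance_fun_comp (f := fun y => y) aemeasurable_id
    (measurable_HT lam).aemeasurable, covariance_HT_gaussianReal_eq_htDof hv0 hlam, hv]
  field_simp

end HardThresholding

/-- consistency of the DOF estimator: `(1/P)(EDOF_HT(Y, λ, h(P)) − DOF_HT(x0, λ))`
converges to `0` in probability as `P → ∞`. -/
theorem score_dof_consistency
    {Ω : Type*} [MeasurableSpace Ω] (μpr : Measure Ω) [IsProbabilityMeasure μpr]
    (σ lam : ℝ) (hσ : 0 < σ) (hlam : 0 < lam)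
    (x0 : ℕ → ℝ) (W : ℕ → Ω → ℝ)
    (hmeas : ∀ i, Measurable (W i))
    (hindep : iIndepFun W μpr)
    (hdist : ∀ i, Measure.map (W i) μpr = gaussianReal 0 ⟨σ ^ 2, sq_nonneg σ⟩)
    (h : ℕ → ℝ) (hpos : ∀ P, 0 < h P)
    (hh0 : Tendsto h atTop (nhds 0))
    (hPh : Tendsto (fun P : ℕ => 1 / ((P : ℝ) * h P)) atTop (nhds 0)) :
    TendstoInMeasure μpr
      (fun (P : ℕ) ω => (1 / (P : ℝ)) *
        (EDOF σ lam (h P) P (fun i => x0 i + W i ω) -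
          DOF μpr σ lam P (fun i ω' => x0 i + W i ω')))
      atTop (fun _ => 0) := by
  -- the literal `⟨σ ^ 2, _⟩` elaborates as a bare subtype and blocks `rw`; abstract it
  obtain ⟨v, hv, hW⟩ :
      ∃ v : ℝ≥0, (v : ℝ) = σ ^ 2 ∧ ∀ i, HasLaw (W i) (gaussianReal 0 v) μpr :=
    ⟨_, rfl, fun i => ⟨(hmeas i).aemeasurable, hdist i⟩⟩
  have hY : ∀ i, HasLaw (fun ω => x0 i + W i ω) (gaussianReal (x0 i) v) μpr := fun i => by
    simpa using gaussianReal_const_add (hW i) (x0 i)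
  have hindep_terms : ∀ P, iIndepFun (fun i ω => edofTerm σ lam (h P) (x0 i + W i ω)) μpr :=
    fun P => hindep.comp (fun i y => edofTerm σ lam (h P) (x0 i + y))
      fun i => (measurable_edofTerm _ _ _).comp (measurable_const_add _)
  refine TendstoInMeasure.congr_left (fun P => .of_forall fun ω => ?_)
    (tendstoInMeasure_average_sub (d := fun _ i => htDof v lam (x0 i) v)
      (fun P i => memLp_edofTerm_comp (hY i).aemeasurable _ _ _ _)
      (fun P i j hij => (hindep_terms P).indepFun hij)
      (fun P i => abs_integral_edofTerm_sub_htDof_le (hY i) hσ hv (hpos P)) ?_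
      (fun P i => variance_edofTerm_le (hY i) hσ hv (hpos P)) ?_)
  · simp only [EDOF_eq_sum_edofTerm, DOF_eq_sum_htDof hY hσ.ne' hv hlam, Finset.sum_sub_distrib]
  · simpa using ((hh0.pow 2).div_const v).const_mul (2 * |lam / √(2 * π * v)|)
  · convert (tendsto_one_div_atTop_nhds_zero_nat.const_mul 2).add
      ((((hh0.pow 2).const_add (σ ^ 2)).mul hPh).const_mul (4 * lam ^ 2 / (π * σ ^ 3))) using 1
    · ext P
      ring
    · simp
end

section
/- Let σ > 0, h > 0, a ∈ ℝ, μ ∈ ℝ, and Y ~ N(μ,σ²). Define A(t,a) = (√(σ² + h²)/h)·exp(−(t − a)²/(2h²)). Then Var[A(Y,a)] = ((σ² + h²)/(h·√(2σ² + h²)))·exp(−(μ − a)²/(2σ² + h²)) − exp(−(μ − a)²/(σ² + h²)). -/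
open MeasureTheory ProbabilityTheory Real
open scoped NNReal ENNReal

/-!
Completing the square, `exp (-(t - μ)² / 2v) · exp (-(t - a)² / c)` is a constant multiple of a
Gaussian in `t`, so for `Y ~ N(μ, v)` one gets
`E exp (-(Y - a)² / c) = √(c / (c + 2v)) · exp (-(μ - a)² / (c + 2v))`.
The mean and the second moment of the kernel are the cases `c = 2h²` and `c = h²`, and the
variance is their difference `E[A²] - (E A)²`.
-/

lemma exp_neg_sq_div_mul_exp_neg_sq_div {v c : ℝ} (hv : 0 < v) (hc : 0 < c) (t μ a : ℝ) :
    exp (-(t - μ) ^ 2 / (2 * v)) * exp (-(t - a) ^ 2 / c) =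
      exp (-(μ - a) ^ 2 / (c + 2 * v)) *
        exp (-((c + 2 * v) / (2 * v * c)) * (t - (c * μ + 2 * v * a) / (c + 2 * v)) ^ 2) := by
  rw [← exp_add, ← exp_add]
  congr 1
  field_simp
  ring

lemma memLp_exp_neg_sq_div (P : Measure ℝ) [IsFiniteMeasure P] (a : ℝ) {c : ℝ} (hc : 0 ≤ c)
    (p : ℝ≥0∞) : MemLp (fun t => exp (-(t - a) ^ 2 / c)) p P := by
  refine memLp_of_bounded (a := 0) (b := 1) (ae_of_all P fun t => ⟨(exp_pos _).le, ?_⟩)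
    (by fun_prop : Continuous fun t => exp (-(t - a) ^ 2 / c)).aestronglyMeasurable p
  rw [exp_le_one_iff]
  exact div_nonpos_of_nonpos_of_nonneg (neg_nonpos.mpr (sq_nonneg _)) hc

lemma integral_exp_neg_sq_div_gaussianReal (μ a : ℝ) (v : ℝ≥0) {c : ℝ} (hc : 0 < c) :
    ∫ t, exp (-(t - a) ^ 2 / c) ∂gaussianReal μ v =
      √(c / (c + 2 * v)) * exp (-(μ - a) ^ 2 / (c + 2 * v)) := by
  rcases eq_or_ne v 0 with rfl | hv
  · simp [gaussianReal_zero_var, div_self hc.ne']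
  have hv' : 0 < (v : ℝ) := NNReal.coe_pos.mpr (pos_iff_ne_zero.mpr hv)
  rw [integral_gaussianReal_eq_integral_smul hv]
  simp_rw [gaussianPDFReal, smul_eq_mul, mul_assoc (√(2 * π * v))⁻¹,
    exp_neg_sq_div_mul_exp_neg_sq_div hv' hc]
  rw [integral_const_mul, integral_const_mul,
    integral_sub_right_eq_self (fun t => exp (-((c + 2 * v) / (2 * v * c)) * t ^ 2)),
    integral_gaussian]
  have : (√(2 * π * v))⁻¹ * √(π / ((c + 2 * v) / (2 * v * c))) = √(c / (c + 2 * v)) := by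
    rw [← sqrt_inv, ← sqrt_mul (by positivity)]
    congr 1
    field_simp
  rw [mul_left_comm, this, mul_comm]

theorem gaussian_kernel_variance_general (σ h a μ₀ : ℝ) (hh : 0 < h) :
    variance (fun t => Real.sqrt (σ ^ 2 + h ^ 2) / h * Real.exp (-(t - a) ^ 2 / (2 * h ^ 2)))
        (gaussianReal μ₀ ⟨σ ^ 2, sq_nonneg σ⟩)
      = (σ ^ 2 + h ^ 2) / (h * Real.sqrt (2 * σ ^ 2 + h ^ 2)) *
          Real.exp (-(μ₀ - a) ^ 2 / (2 * σ ^ 2 + h ^ 2)) -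
        Real.exp (-(μ₀ - a) ^ 2 / (σ ^ 2 + h ^ 2)) := by
  set v : ℝ≥0 := ⟨σ ^ 2, sq_nonneg σ⟩
  have hv : (v : ℝ) = σ ^ 2 := rfl
  have hS : 0 < σ ^ 2 + h ^ 2 := by positivity
  have h_mean : ∫ t, √(σ ^ 2 + h ^ 2) / h * exp (-(t - a) ^ 2 / (2 * h ^ 2))
      ∂gaussianReal μ₀ v = exp (-(μ₀ - a) ^ 2 / (2 * (σ ^ 2 + h ^ 2))) := by
    rw [integral_const_mul, integral_exp_neg_sq_div_gaussianReal _ _ _ (by positivity),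
      hv, show 2 * h ^ 2 + 2 * σ ^ 2 = 2 * (σ ^ 2 + h ^ 2) by ring,
      mul_div_mul_left _ _ two_ne_zero, sqrt_div (sq_nonneg h), sqrt_sq hh.le, ← mul_assoc]
    field_simp
  have h_sq : ∀ t, (√(σ ^ 2 + h ^ 2) / h * exp (-(t - a) ^ 2 / (2 * h ^ 2))) ^ 2 =
      (σ ^ 2 + h ^ 2) / h ^ 2 * exp (-(t - a) ^ 2 / h ^ 2) := by
    intro t
    rw [mul_pow, div_pow, sq_sqrt hS.le, sq (exp _), ← exp_add]
    congr 2
    ring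
  have h_second_moment : ∫ t, (√(σ ^ 2 + h ^ 2) / h * exp (-(t - a) ^ 2 / (2 * h ^ 2))) ^ 2
      ∂gaussianReal μ₀ v = (σ ^ 2 + h ^ 2) / (h * √(2 * σ ^ 2 + h ^ 2)) *
        exp (-(μ₀ - a) ^ 2 / (2 * σ ^ 2 + h ^ 2)) := by
    rw [integral_congr_ae (ae_of_all _ h_sq), integral_const_mul,
      integral_exp_neg_sq_div_gaussianReal _ _ _ (by positivity), hv,
      add_comm (h ^ 2), sqrt_div (sq_nonneg h), sqrt_sq hh.le]
    field_simp
  rw [variance_eq_sub ((memLp_exp_neg_sq_div _ a (by positivity) 2).const_mul _)]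
  simp only [Pi.pow_apply]
  rw [h_second_moment, h_mean, sq (exp _), ← exp_add]
  congr 2
  field_simp
  ring

/-- for `Y ~ N(μ₀, σ²)` and the scaled Gaussian kernel
`A(t,a) = (√(σ²+h²)/h)·exp(−(t−a)²/(2h²))`, one has
`Var[A(Y,a)] = ((σ²+h²)/(h√(2σ²+h²)))·exp(−(μ₀−a)²/(2σ²+h²)) − exp(−(μ₀−a)²/(σ²+h²))`. -/
theorem gaussian_kernel_variance (σ h a μ₀ : ℝ) (hσ : 0 < σ) (hh : 0 < h) :
    variance (fun t => Real.sqrt (σ ^ 2 + h ^ 2) / h * Real.exp (-(t - a) ^ 2 / (2 * h ^ 2)))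
        (gaussianReal μ₀ ⟨σ ^ 2, sq_nonneg σ⟩)
      = (σ ^ 2 + h ^ 2) / (h * Real.sqrt (2 * σ ^ 2 + h ^ 2)) *
          Real.exp (-(μ₀ - a) ^ 2 / (2 * σ ^ 2 + h ^ 2)) -
        Real.exp (-(μ₀ - a) ^ 2 / (σ ^ 2 + h ^ 2)) :=
  gaussian_kernel_variance_general σ h a μ₀ hh
end
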